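/- arXiv:1502.03317 — 2 statements merged into one kernel-verified Lean document; each statement's English description precedes it below -/
import Mathlib

section
/- Let d, m ≥ 1, let φ be a real-valued Schwartz function on ℝ^d, and let f₁, …, f_m, g be Schwartz functions on ℝ^d. Then for all x, ν ∈ ℝ^d and all t = (t₁,…,t_m), ξ = (ξ₁,…,ξ_m) ∈ (ℝ^d)^m: ∫_{(ℝ^d)^m} ∫_{ℝ^d} e^{−2πi (x̃·ν + Σ_{i=1}^m t̃_i·ξ_i)} · conj(∏_{i=1}^m f_i(x̃ − t̃_i)) · g(x̃) · (∏_{i=1}^m φ(x̃ − x − t̃_i + t_i)) · φ(x̃ − x) dx̃ dt̃ = conj(∏_{i=1}^m V_φ f_i(x − t_i, ξ_i)) · V_φ g(x, ν + Σ_{i=1}^m ξ_i). -/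
open MeasureTheory Complex
open scoped ENNReal NNReal RealInnerProductSpace

noncomputable section

abbrev Ed (d : ℕ) := EuclideanSpace ℝ (Fin d)

/-- `e2pi a = e^{2πi a}`. -/
def e2pi (a : ℝ) : ℂ := Complex.exp (2 * Real.pi * Complex.I * (a : ℂ))

/-- Short-time Fourier transform `V_φ f (t, ν)`. -/
def STFT (d : ℕ) (φ f : Ed d → ℂ) (t ν : Ed d) : ℂ :=
  ∫ y, f y * e2pi (-⟪y, ν⟫) * φ (y - t)

/-- The Gaussian window `e^{-‖x‖²}` as a complex-valued function. -/
def gauss (d : ℕ) : Ed d → ℂ := fun x => (Real.exp (-‖x‖ ^ 2) : ℝ)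

/-- `L^p`-type norm (`ℝ≥0∞`-valued) with essential supremum in case `p = ∞`. -/
def eNorm {α : Type*} [MeasurableSpace α] (μ : Measure α) (p : ℝ≥0∞) (F : α → ℝ≥0∞) : ℝ≥0∞ :=
  if p = ∞ then essSup F μ else (∫⁻ a, F a ^ p.toReal ∂μ) ^ (1 / p.toReal)

/-- Modulation space norm `‖f‖_{M^{p,q}}` with the Gaussian window. -/
def modNorm (d : ℕ) (p q : ℝ≥0∞) (f : Ed d → ℂ) : ℝ≥0∞ :=
  eNorm volume q fun ν => eNorm volume p fun t => (‖STFT d (gauss d) f t ν‖₊ : ℝ≥0∞)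

/-- The Gaussian window on `ℝ^{3d}`. -/
def gauss3 (d : ℕ) : Ed d × Ed d × Ed d → ℂ :=
  fun X => (Real.exp (-‖X.1‖ ^ 2 - ‖X.2.1‖ ^ 2 - ‖X.2.2‖ ^ 2) : ℝ)

/-- Symbol short-time Fourier transform of a symbol on `ℝ^{3d}`. -/
def symbSTFT (d : ℕ) (Φ σ : Ed d × Ed d × Ed d → ℂ) (x t₁ t₂ ξ₁ ξ₂ ν : Ed d) : ℂ :=
  ∫ X : Ed d × Ed d × Ed d,
    σ X * Φ (X.1 - x, X.2.1 - ξ₁, X.2.2 - ξ₂) *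
      e2pi (-(⟪X.1, ν⟫ - ⟪t₁, X.2.1⟫ - ⟪t₂, X.2.2⟫))

/-- Fourier transform. -/
def FT (d : ℕ) (f : Ed d → ℂ) (ξ : Ed d) : ℂ := ∫ y, f y * e2pi (-⟪y, ξ⟫)

/-- Bilinear pseudodifferential operator `T_σ`. -/
def biOp (d : ℕ) (σ : Ed d × Ed d × Ed d → ℂ) (f₁ f₂ : Ed d → ℂ) (x : Ed d) : ℂ :=
  ∫ ξ : Ed d × Ed d,
    e2pi ⟪x, ξ.1 + ξ.2⟫ * σ (x, ξ.1, ξ.2) * FT d f₁ ξ.1 * FT d f₂ ξ.2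



/-!
After the unimodular change of variables `Yᵢ = X - Tᵢ` the integrand
splits as `(∏ i, Hᵢ (Yᵢ)) * G X`, where `G` is the integrand of `V_φ g (x, ν + ∑ ξᵢ)` and
`Hᵢ` the conjugate of the integrand of `V_φ fᵢ (x - tᵢ, ξᵢ)`; the phases combine because
`⟪X, ν⟫ + ∑ ⟪Tᵢ, ξᵢ⟫ = ⟪X, ν + ∑ ξᵢ⟫ - ∑ ⟪X - Tᵢ, ξᵢ⟫`. Fubini then factors the integral.
-/

section Character

lemma e2pi_add (a b : ℝ) : e2pi (a + b) = e2pi a * e2pi b := by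
  rw [e2pi, e2pi, e2pi, ← Complex.exp_add]
  push_cast
  ring_nf

lemma e2pi_sum {ι : Type*} (s : Finset ι) (a : ι → ℝ) :
    e2pi (∑ i ∈ s, a i) = ∏ i ∈ s, e2pi (a i) := by
  rw [e2pi]
  push_cast
  rw [Finset.mul_sum, Complex.exp_sum]
  rfl

lemma norm_e2pi (a : ℝ) : ‖e2pi a‖ = 1 := by
  rw [e2pi, Complex.norm_exp]
  simp

lemma conj_e2pi (a : ℝ) : starRingEnd ℂ (e2pi a) = e2pi (-a) := by
  rw [e2pi, e2pi, ← Complex.exp_conj]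
  simp [map_ofNat]

lemma continuous_e2pi : Continuous e2pi := by
  unfold e2pi
  fun_prop

end Character

section Window

lemma MeasureTheory.Integrable.conj {α 𝕜 : Type*} [RCLike 𝕜] [MeasurableSpace α] {μ : Measure α}
    {f : α → 𝕜} (hf : Integrable f μ) : Integrable (fun x => starRingEnd 𝕜 (f x)) μ :=
  (RCLike.conjCLE (K := 𝕜)).toContinuousLinearMap.integrable_comp hf

variable {E : Type*} [NormedAddCommGroup E] [InnerProductSpace ℝ E] [MeasurableSpace E]
  [OpensMeasurableSpace E] {μ : Measure E}

lemma integrable_stft_integrand {f φ : E → ℂ} (hf : Integrable f μ) (hφ : Continuous φ)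
    {C : ℝ} (hC : ∀ y, ‖φ y‖ ≤ C) (t ν : E) :
    Integrable (fun y => f y * e2pi (-⟪y, ν⟫) * φ (y - t)) μ := by
  have hcont : Continuous fun y => e2pi (-⟪y, ν⟫) * φ (y - t) := by
    have := continuous_e2pi
    fun_prop
  refine (hf.mul_bdd hcont.aestronglyMeasurable (c := C) (.of_forall fun y => ?_)).congr
    (.of_forall fun y => (mul_assoc _ _ _).symm)
  simpa [norm_e2pi] using hC (y - t)

end Window

section Shear

variable {ι E 𝕜 : Type*} [Fintype ι] [RCLike 𝕜] [AddCommGroup E] [MeasurableSpace E]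
  [MeasurableAdd₂ E] [MeasurableNeg E] (μ : Measure E) [SigmaFinite μ] [μ.IsAddLeftInvariant]
  [μ.IsNegInvariant]

lemma measurePreserving_sub_pi_prod :
    MeasurePreserving (fun p : (ι → E) × E => ((fun i => p.2 - p.1 i), p.2))
      ((Measure.pi fun _ => μ).prod μ) ((Measure.pi fun _ => μ).prod μ) := by
  have hsub_left : ∀ X : E, Measure.map (fun T : ι → E => (fun i => X - T i))
      (Measure.pi fun _ => μ) = Measure.pi fun _ => μ :=
    fun X => Measure.map_sub_left_eq_self _ (fun _ => X)
  have hmeas : Measurable (Function.uncurry fun (X : E) (T : ι → E) => fun i => X - T i) :=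
    measurable_pi_lambda _ fun i => measurable_fst.sub ((measurable_pi_apply i).comp measurable_snd)
  have hskew := (MeasurePreserving.id μ).skew_product hmeas (.of_forall hsub_left)
  exact (Measure.measurePreserving_swap.comp hskew).comp Measure.measurePreserving_swap

lemma integral_pi_integral_prod_comp_sub_mul {H : ι → E → 𝕜} {G : E → 𝕜}
    (hH : ∀ i, Integrable (H i) μ) (hG : Integrable G μ) :
    ∫ T, ∫ X, (∏ i, H i (X - T i)) * G X ∂μ ∂(Measure.pi fun _ => μ)
      = (∏ i, ∫ y, H i y ∂μ) * ∫ X, G X ∂μ := by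
  have hint : Integrable (Function.uncurry fun (T : ι → E) X => (∏ i, H i (X - T i)) * G X)
      ((Measure.pi fun _ => μ).prod μ) :=
    (measurePreserving_sub_pi_prod μ).integrable_comp_of_integrable
      ((Integrable.fintype_prod hH).mul_prod hG)
  have hinner : ∀ X, ∫ T, (∏ i, H i (X - T i)) * G X ∂(Measure.pi fun _ => μ)
      = (∏ i, ∫ y, H i y ∂μ) * G X := fun X => by
    rw [integral_mul_const, integral_fintype_prod_eq_prod (fun i y => H i (X - y))]
    simp only [integral_sub_left_eq_self]
  rw [integral_integral_swap hint]
  simp only [hinner, integral_const_mul]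

end Shear

theorem stmt2_general (d m : ℕ)
    (φ : SchwartzMap (Ed d) ℝ) (f : Fin m → SchwartzMap (Ed d) ℂ) (g : SchwartzMap (Ed d) ℂ)
    (x ν : Ed d) (t ξ : Fin m → Ed d) :
    (∫ T : Fin m → Ed d, ∫ X : Ed d,
        e2pi (-(⟪X, ν⟫ + ∑ i, ⟪T i, ξ i⟫)) *
          (starRingEnd ℂ) (∏ i, f i (X - T i)) * g X *
          (∏ i, ((φ (X - x - T i + t i) : ℝ) : ℂ)) * ((φ (X - x) : ℝ) : ℂ))
      = (starRingEnd ℂ) (∏ i, STFT d (fun y => ((φ y : ℝ) : ℂ)) (⇑(f i)) (x - t i) (ξ i)) *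
          STFT d (fun y => ((φ y : ℝ) : ℂ)) (⇑g) x (ν + ∑ i, ξ i) := by
  have hw : Continuous fun y => ((φ y : ℝ) : ℂ) := by fun_prop
  have hwC : ∀ y, ‖((φ y : ℝ) : ℂ)‖ ≤ SchwartzMap.seminorm ℝ 0 0 φ := fun y => by
    simpa using φ.norm_le_seminorm ℝ y
  have hphase : ∀ (T : Fin m → Ed d) (X : Ed d), e2pi (-(⟪X, ν⟫ + ∑ i, ⟪T i, ξ i⟫))
      = (∏ i, e2pi ⟪X - T i, ξ i⟫) * e2pi (-⟪X, ν + ∑ i, ξ i⟫) := fun T X => by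
    rw [← e2pi_sum, ← e2pi_add]
    simp only [inner_sub_left, inner_add_right, inner_sum, Finset.sum_sub_distrib]
    ring_nf
  have hsplit : ∀ (T : Fin m → Ed d) (X : Ed d),
      e2pi (-(⟪X, ν⟫ + ∑ i, ⟪T i, ξ i⟫)) * starRingEnd ℂ (∏ i, f i (X - T i)) * g X *
          (∏ i, ((φ (X - x - T i + t i) : ℝ) : ℂ)) * ((φ (X - x) : ℝ) : ℂ)
        = (∏ i, starRingEnd ℂ
              (f i (X - T i) * e2pi (-⟪X - T i, ξ i⟫) * ((φ (X - T i - (x - t i)) : ℝ) : ℂ)))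
          * (g X * e2pi (-⟪X, ν + ∑ i, ξ i⟫) * ((φ (X - x) : ℝ) : ℂ)) := fun T X => by
    have harg : ∀ i, X - x - T i + t i = X - T i - (x - t i) := fun i => by abel
    simp only [hphase, harg, map_prod, map_mul, conj_e2pi, neg_neg, Complex.conj_ofReal,
      Finset.prod_mul_distrib]
    ring
  simp only [hsplit]
  rw [volume_pi, integral_pi_integral_prod_comp_sub_mul volume
    (fun i => (integrable_stft_integrand (f i).integrable hw hwC _ _).conj)
    (integrable_stft_integrand g.integrable hw hwC _ _)]
  simp only [integral_conj, ← map_prod]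
  rfl

/-- the fundamental STFT identity (Lemma `lemmaT_A` of the paper):
the `2(m+1)d`-dimensional integral factors into a product of short-time Fourier
transforms. -/
theorem stmt2 (d m : ℕ) (hd : 1 ≤ d) (hm : 1 ≤ m)
    (φ : SchwartzMap (Ed d) ℝ) (f : Fin m → SchwartzMap (Ed d) ℂ) (g : SchwartzMap (Ed d) ℂ)
    (x ν : Ed d) (t ξ : Fin m → Ed d) :
    (∫ T : Fin m → Ed d, ∫ X : Ed d,
        e2pi (-(⟪X, ν⟫ + ∑ i, ⟪T i, ξ i⟫)) *
          (starRingEnd ℂ) (∏ i, f i (X - T i)) * g X *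
          (∏ i, ((φ (X - x - T i + t i) : ℝ) : ℂ)) * ((φ (X - x) : ℝ) : ℂ))
      = (starRingEnd ℂ) (∏ i, STFT d (fun y => ((φ y : ℝ) : ℂ)) (⇑(f i)) (x - t i) (ξ i)) *
          STFT d (fun y => ((φ y : ℝ) : ℂ)) (⇑g) x (ν + ∑ i, ξ i) :=
  stmt2_general d m φ f g x ν t ξ

end
end

section
/- Let d ≥ 1 and let 1 ≤ p₀, p₁, p₂, r₀, r₁, r₂ ≤ ∞ satisfy: p₁ ≤ r₁, p₂ ≤ r₂, r₀ ≤ p₁ (i.e. 0 ≤ 1/r₀ − 1/p₁), 1/p₁ − 1/r₁ ≤ 1/r₀ − 1/p₂, and (1/p₁ − 1/r₁) + (1/p₂ − 1/r₂) = 1/r₀ − 1/p₀. Then for all f₁ ∈ L^{p₁}(ℝ^d), f₂ ∈ L^{p₂}(ℝ^d), g ∈ L^{p₀}(ℝ^d): (∫_{ℝ^d} (∫_{ℝ^d} (∫_{ℝ^d} |f₁(x−t₁) f₂(x−t₂) g(x)|^{r₀} dx)^{r₁/r₀} dt₁)^{r₂/r₁} dt₂)^{1/r₂} ≤ ‖g‖_{L^{p₀}}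 ‖f₁‖_{L^{p₁}} ‖f₂‖_{L^{p₂}}, with essential suprema replacing integrals for infinite exponents. -/
open MeasureTheory Complex
open scoped ENNReal NNReal RealInnerProductSpace

noncomputable section

/-!
For nonnegative `F`, `H` on an abelian group with a translation- and reflection-invariant
measure, `1 ≤ r₀ ≤ p ≤ r` and `1/s + 1/p = 1/r₀ + 1/r`, one has
`‖ ‖F (x - t) H x‖_{L^{r₀}_x} ‖_{L^r_t} ≤ ‖F‖_p ‖H‖_s`:
this is Young's inequality for the correlation of `F ^ r₀` and `H ^ r₀` with exponents
`p / r₀`, `s / r₀`, `r / r₀`, and Young's inequality in turn follows from Hölder's inequality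
for three functions and Tonelli's theorem. The theorem is two applications of this bound, first
to `|f₁|` and `|f₂ (· - t₂) g|` for fixed `t₂`, then to `|f₂|` and `|g|`, through the
intermediate exponent `1/q = 1/r₀ - 1/p₁ + 1/r₁`; the hypotheses on the exponents say exactly
that `q` is admissible in both steps.
-/

section LpNorm

variable {α : Type*} [MeasurableSpace α] {μ : Measure α}

theorem eNorm_eq_eLpNorm {p : ℝ≥0∞} (hp : p ≠ 0) (F : α → ℝ≥0∞) :
    eNorm μ p F = eLpNorm F p μ := by
  rcases eq_or_ne p ∞ with rfl | hp_top
  · simp [eNorm, eLpNorm_exponent_top, eLpNormEssSup_eq_essSup_enorm]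
  · simp [eNorm, hp_top, eLpNorm_eq_lintegral_rpow_enorm_toReal hp hp_top]

theorem eLpNorm_rpow {F : α → ℝ≥0∞} {p : ℝ≥0∞} {q : ℝ} (hq : 0 < q) :
    eLpNorm (fun x => F x ^ q) p μ = eLpNorm F (p * ENNReal.ofReal q) μ ^ q := by
  simpa using eLpNorm_enorm_rpow (μ := μ) (p := p) F hq

theorem eLpNorm_eLpNorm_eq_eLpNorm_lintegral_rpow {β : Type*} [MeasurableSpace β] {ν : Measure β}
    {Φ : β → α → ℝ≥0∞} {r₀ r : ℝ≥0∞} (hr₀ : r₀ ≠ 0) (hr₀_top : r₀ ≠ ∞) :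
    eLpNorm (fun t => eLpNorm (Φ t) r₀ μ) r ν =
      eLpNorm (fun t => ∫⁻ x, Φ t x ^ r₀.toReal ∂μ) (r / r₀) ν ^ r₀.toReal⁻¹ := by
  have hκ : 0 < r₀.toReal := ENNReal.toReal_pos hr₀ hr₀_top
  simp only [eLpNorm_eq_lintegral_rpow_enorm_toReal hr₀ hr₀_top, enorm_eq_self, one_div]
  rw [eLpNorm_rpow (inv_pos.2 hκ), ENNReal.ofReal_inv_of_pos hκ,
    ENNReal.ofReal_toReal hr₀_top, div_eq_mul_inv]

theorem lintegral_mul_le_eLpNorm_mul_eLpNorm {b c : ℝ≥0∞} [b.HolderConjugate c]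
    {F H : α → ℝ≥0∞} (hF : AEMeasurable F μ) (hH : AEMeasurable H μ) :
    ∫⁻ x, F x * H x ∂μ ≤ eLpNorm F b μ * eLpNorm H c μ := by
  have top_one : ∀ {F H : α → ℝ≥0∞}, AEMeasurable H μ →
      ∫⁻ x, F x * H x ∂μ ≤ eLpNorm F ∞ μ * eLpNorm H 1 μ := fun {F H} hH =>
    calc ∫⁻ x, F x * H x ∂μ ≤ ∫⁻ x, essSup F μ * H x ∂μ :=
          lintegral_mono_ae <| (ENNReal.ae_le_essSup F).mono fun x hx => by gcongr
      _ = essSup F μ * ∫⁻ x, H x ∂μ := lintegral_const_mul'' _ hH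
      _ = eLpNorm F ∞ μ * eLpNorm H 1 μ := by
          simp [eLpNorm_exponent_top, eLpNormEssSup_eq_essSup_enorm,
            eLpNorm_one_eq_lintegral_enorm]
  rcases eq_or_ne b ∞ with rfl | hb
  · obtain rfl : c = 1 := (ENNReal.HolderConjugate.eq_top_iff_eq_one ∞ c).1 rfl
    exact top_one hH
  rcases eq_or_ne c ∞ with rfl | hc
  · obtain rfl : b = 1 := (ENNReal.HolderConjugate.eq_top_iff_eq_one ∞ b).1 rfl
    simpa only [mul_comm] using top_one (F := H) hF
  have hb0 := ENNReal.HolderConjugate.ne_zero b c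
  have hc0 := ENNReal.HolderConjugate.ne_zero c b
  simpa [eLpNorm_eq_lintegral_rpow_enorm_toReal, hb, hc, hb0, hc0] using
    ENNReal.lintegral_mul_le_Lp_mul_Lq μ (ENNReal.HolderConjugate.toReal_of_ne_top hb hc) hF hH

theorem lintegral_mul_le_of_inv_add_inv_eq {X Y : α → ℝ≥0∞} (hX : AEMeasurable X μ)
    (hY : AEMeasurable Y μ) {β γ θ : ℝ} (hβ : 1 ≤ β) (hγ : 1 ≤ γ) (hθ : 0 ≤ θ)
    (h : β⁻¹ + γ⁻¹ = 1 + θ) :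
    ∫⁻ x, X x * Y x ∂μ ≤ (∫⁻ x, X x ^ β * Y x ^ γ ∂μ) ^ θ *
      (∫⁻ x, X x ^ β ∂μ) ^ (1 - γ⁻¹) * (∫⁻ x, Y x ^ γ ∂μ) ^ (1 - β⁻¹) := by
  have hβ' : 0 ≤ 1 - β⁻¹ := sub_nonneg.2 (inv_le_one_of_one_le₀ hβ)
  have hγ' : 0 ≤ 1 - γ⁻¹ := sub_nonneg.2 (inv_le_one_of_one_le₀ hγ)
  have hβγ : β * θ + β * (1 - γ⁻¹) = 1 := by
    rw [← mul_add, show θ + (1 - γ⁻¹) = β⁻¹ by linarith, mul_inv_cancel₀ (by positivity)]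
  have hγβ : γ * θ + γ * (1 - β⁻¹) = 1 := by
    rw [← mul_add, show θ + (1 - β⁻¹) = γ⁻¹ by linarith, mul_inv_cancel₀ (by positivity)]
  have factor : ∀ x, X x * Y x =
      (X x ^ β * Y x ^ γ) ^ θ * (X x ^ β) ^ (1 - γ⁻¹) * (Y x ^ γ) ^ (1 - β⁻¹) := fun x => by
    rw [ENNReal.mul_rpow_of_nonneg _ _ hθ, ← ENNReal.rpow_mul, ← ENNReal.rpow_mul,
      ← ENNReal.rpow_mul, ← ENNReal.rpow_mul, mul_right_comm (X x ^ _), mul_assoc,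
      ← ENNReal.rpow_add_of_nonneg _ _ (by positivity) (by positivity),
      ← ENNReal.rpow_add_of_nonneg _ _ (by positivity) (by positivity), hβγ, hγβ,
      ENNReal.rpow_one, ENNReal.rpow_one]
  have holder := ENNReal.lintegral_prod_norm_pow_le (μ := μ) Finset.univ
    (f := ![fun x => X x ^ β * Y x ^ γ, fun x => X x ^ β, fun x => Y x ^ γ])
    (p := ![θ, 1 - γ⁻¹, 1 - β⁻¹])
    (fun i _ => by
      fin_cases i
      exacts [(hX.pow_const β).mul (hY.pow_const γ), hX.pow_const β, hY.pow_const γ])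
    (by simp [Fin.sum_univ_three]; linarith)
    (fun i _ => by fin_cases i <;> assumption)
  simpa [Fin.prod_univ_three, ← factor] using holder

end LpNorm

section Young

variable {G : Type*} [MeasurableSpace G] [AddCommGroup G] [MeasurableAdd₂ G]
  {μ : Measure G} [μ.IsAddLeftInvariant]

theorem AEMeasurable.comp_sub_right {F : G → ℝ≥0∞} (hF : AEMeasurable F μ) (t : G) :
    AEMeasurable (fun x => F (x - t)) μ :=
  hF.comp_quasiMeasurePreserving (measurePreserving_sub_right μ t).quasiMeasurePreserving

theorem eLpNorm_comp_sub_right {F : G → ℝ≥0∞} (hF : AEMeasurable F μ) (p : ℝ≥0∞) (t : G) :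
    eLpNorm (fun x => F (x - t)) p μ = eLpNorm F p μ :=
  eLpNorm_comp_measurePreserving hF.aestronglyMeasurable (measurePreserving_sub_right μ t)

theorem eLpNorm_top_eLpNorm_top_comp_sub_mul_le {F H : G → ℝ≥0∞} (hF : AEMeasurable F μ) :
    eLpNorm (fun t => eLpNorm (fun x => F (x - t) * H x) ∞ μ) ∞ μ ≤
      eLpNorm F ∞ μ * eLpNorm H ∞ μ := by
  rw [eLpNorm_exponent_top]
  refine eLpNormEssSup_le_of_ae_enorm_bound (ae_of_all _ fun t => ?_)
  rw [enorm_eq_self, ← eLpNorm_comp_sub_right hF ∞ t]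
  simp only [eLpNorm_exponent_top, eLpNormEssSup_eq_essSup_enorm, enorm_eq_self]
  exact ENNReal.essSup_mul_le _ _

variable [MeasurableNeg G] [SFinite μ]

theorem AEMeasurable.comp_sub_mul_prod {F H : G → ℝ≥0∞} (hF : AEMeasurable F μ)
    (hH : AEMeasurable H μ) :
    AEMeasurable (fun z : G × G => F (z.2 - z.1) * H z.2) (μ.prod μ) :=
  (hF.comp_quasiMeasurePreserving ((quasiMeasurePreserving_sub μ μ).comp
    Measure.measurePreserving_swap.quasiMeasurePreserving)).mul
    (hH.comp_quasiMeasurePreserving Measure.quasiMeasurePreserving_snd)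

variable [μ.IsNegInvariant]

theorem lintegral_lintegral_comp_sub_mul {F H : G → ℝ≥0∞} (hF : AEMeasurable F μ)
    (hH : AEMeasurable H μ) :
    ∫⁻ t, ∫⁻ x, F (x - t) * H x ∂μ ∂μ = (∫⁻ x, F x ∂μ) * ∫⁻ x, H x ∂μ := by
  rw [lintegral_lintegral_swap (hF.comp_sub_mul_prod hH), ← lintegral_const_mul'' _ hH]
  refine lintegral_congr fun x => ?_
  have hx := Measure.measurePreserving_sub_left μ x
  have hFx : AEMeasurable (fun t => F (x - t)) μ :=
    hF.comp_quasiMeasurePreserving hx.quasiMeasurePreserving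
  rw [lintegral_mul_const'' _ hFx, lintegral_sub_left_eq_self]

theorem lintegral_rpow_lintegral_comp_sub_mul_le {F H : G → ℝ≥0∞} (hF : AEMeasurable F μ)
    (hH : AEMeasurable H μ) {β γ ρ : ℝ} (hβ : 1 ≤ β) (hγ : 1 ≤ γ) (hρ : 0 < ρ)
    (hβγ : β⁻¹ + γ⁻¹ = 1 + ρ⁻¹) :
    (∫⁻ t, (∫⁻ x, F (x - t) * H x ∂μ) ^ ρ ∂μ) ^ ρ⁻¹ ≤
      (∫⁻ x, F x ^ β ∂μ) ^ β⁻¹ * (∫⁻ x, H x ^ γ ∂μ) ^ γ⁻¹ := by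
  set Ib := ∫⁻ x, F x ^ β ∂μ
  set Ic := ∫⁻ x, H x ^ γ ∂μ
  set K := Ib ^ (1 - γ⁻¹) * Ic ^ (1 - β⁻¹)
  set Ψ := fun t => ∫⁻ x, F (x - t) ^ β * H x ^ γ ∂μ
  have pointwise : ∀ t, ∫⁻ x, F (x - t) * H x ∂μ ≤ Ψ t ^ ρ⁻¹ * K := fun t => by
    have := lintegral_mul_le_of_inv_add_inv_eq (hF.comp_sub_right t) hH hβ hγ
      (inv_nonneg.2 hρ.le) hβγ
    rwa [lintegral_sub_right_eq_self (fun x => F x ^ β), mul_assoc] at this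
  have hΨ : AEMeasurable Ψ μ :=
    ((hF.pow_const β).comp_sub_mul_prod (hH.pow_const γ)).lintegral_prod_right'
  have hβ' : 0 ≤ 1 - β⁻¹ := sub_nonneg.2 (inv_le_one_of_one_le₀ hβ)
  have hγ' : 0 ≤ 1 - γ⁻¹ := sub_nonneg.2 (inv_le_one_of_one_le₀ hγ)
  calc (∫⁻ t, (∫⁻ x, F (x - t) * H x ∂μ) ^ ρ ∂μ) ^ ρ⁻¹
      ≤ (∫⁻ t, (Ψ t ^ ρ⁻¹ * K) ^ ρ ∂μ) ^ ρ⁻¹ := by gcongr with t; exact pointwise t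
    _ = (Ib * Ic * K ^ ρ) ^ ρ⁻¹ := by
        simp_rw [ENNReal.mul_rpow_of_nonneg _ _ hρ.le, ← ENNReal.rpow_mul,
          inv_mul_cancel₀ hρ.ne', ENNReal.rpow_one]
        rw [lintegral_mul_const'' _ hΨ,
          lintegral_lintegral_comp_sub_mul (hF.pow_const β) (hH.pow_const γ)]
    _ = (Ib * Ic) ^ ρ⁻¹ * K := by
        rw [ENNReal.mul_rpow_of_nonneg _ _ (by positivity), ← ENNReal.rpow_mul,
          mul_inv_cancel₀ hρ.ne', ENNReal.rpow_one]
    _ = Ib ^ β⁻¹ * Ic ^ γ⁻¹ := by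
        rw [ENNReal.mul_rpow_of_nonneg _ _ (by positivity), mul_mul_mul_comm,
          ← ENNReal.rpow_add_of_nonneg _ _ (by positivity) hγ',
          ← ENNReal.rpow_add_of_nonneg _ _ (by positivity) hβ']
        congr 2 <;> linarith

theorem eLpNorm_lintegral_comp_sub_mul_le {F H : G → ℝ≥0∞} (hF : AEMeasurable F μ)
    (hH : AEMeasurable H μ) {a b c : ℝ≥0∞} (hb : 1 ≤ b) (hc : 1 ≤ c)
    (habc : b⁻¹ + c⁻¹ = 1 + a⁻¹) :
    eLpNorm (fun t => ∫⁻ x, F (x - t) * H x ∂μ) a μ ≤ eLpNorm F b μ * eLpNorm H c μ := by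
  rcases eq_or_ne a ∞ with rfl | ha
  · have : b.HolderConjugate c := ENNReal.holderConjugate_iff.2 (by simpa using habc)
    rw [eLpNorm_exponent_top]
    refine eLpNormEssSup_le_of_ae_enorm_bound (ae_of_all _ fun t => ?_)
    calc ‖∫⁻ x, F (x - t) * H x ∂μ‖ₑ = ∫⁻ x, F (x - t) * H x ∂μ := enorm_eq_self _
      _ ≤ eLpNorm (fun x => F (x - t)) b μ * eLpNorm H c μ :=
          lintegral_mul_le_eLpNorm_mul_eLpNorm (hF.comp_sub_right t) hH
      _ = eLpNorm F b μ * eLpNorm H c μ := by rw [eLpNorm_comp_sub_right hF]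
  have ne_top : ∀ {b c : ℝ≥0∞}, 1 ≤ c → b⁻¹ + c⁻¹ = 1 + a⁻¹ → b ≠ ∞ := by
    rintro b c hc habc rfl
    have : 1 + a⁻¹ ≤ 1 + 0 := by simpa [← habc] using hc
    exact ha (ENNReal.inv_eq_zero.1
      (le_zero_iff.1 ((ENNReal.add_le_add_iff_left ENNReal.one_ne_top).1 this)))
  have hb_top := ne_top hc habc
  have hc_top := ne_top hb (by rwa [add_comm])
  have hb0 : b ≠ 0 := (one_pos.trans_le hb).ne'
  have hc0 : c ≠ 0 := (one_pos.trans_le hc).ne'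
  have ha0 : a ≠ 0 := by
    rintro rfl
    simp [ENNReal.inv_ne_top.2 hb0, ENNReal.inv_ne_top.2 hc0] at habc
  simp only [eLpNorm_eq_lintegral_rpow_enorm_toReal ha0 ha,
    eLpNorm_eq_lintegral_rpow_enorm_toReal hb0 hb_top,
    eLpNorm_eq_lintegral_rpow_enorm_toReal hc0 hc_top, enorm_eq_self, one_div]
  refine lintegral_rpow_lintegral_comp_sub_mul_le hF hH
    (ENNReal.toReal_one ▸ ENNReal.toReal_mono hb_top hb)
    (ENNReal.toReal_one ▸ ENNReal.toReal_mono hc_top hc) (ENNReal.toReal_pos ha0 ha) ?_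
  simpa [ENNReal.toReal_add, ENNReal.toReal_inv, hb0, hc0, ha0] using congrArg ENNReal.toReal habc

theorem eLpNorm_eLpNorm_comp_sub_mul_le {F H : G → ℝ≥0∞} (hF : AEMeasurable F μ)
    (hH : AEMeasurable H μ) {r₀ p r s : ℝ≥0∞} (hr₀ : 1 ≤ r₀) (hr₀p : r₀ ≤ p) (hpr : p ≤ r)
    (hs : s⁻¹ + p⁻¹ = r₀⁻¹ + r⁻¹) :
    eLpNorm (fun t => eLpNorm (fun x => F (x - t) * H x) r₀ μ) r μ ≤
      eLpNorm F p μ * eLpNorm H s μ := by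
  have hr₀0 : r₀ ≠ 0 := (one_pos.trans_le hr₀).ne'
  have hp0 : p ≠ 0 := (one_pos.trans_le (hr₀.trans hr₀p)).ne'
  have hr₀s : r₀ ≤ s := by
    refine ENNReal.inv_le_inv.1 ((ENNReal.add_le_add_iff_right (ENNReal.inv_ne_top.2 hp0)).1 ?_)
    rw [hs]
    gcongr
  rcases eq_or_ne r₀ ∞ with rfl | hr₀_top
  · obtain rfl : p = ∞ := top_le_iff.1 hr₀p
    obtain rfl : r = ∞ := top_le_iff.1 hpr
    obtain rfl : s = ∞ := top_le_iff.1 hr₀s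
    exact eLpNorm_top_eLpNorm_top_comp_sub_mul_le hF
  rw [eLpNorm_eLpNorm_eq_eLpNorm_lintegral_rpow hr₀0 hr₀_top]
  set κ := r₀.toReal
  have hκ : 0 < κ := ENNReal.toReal_pos hr₀0 hr₀_top
  have rescale : ∀ {u : ℝ≥0∞} {Φ : G → ℝ≥0∞},
      eLpNorm (fun x => Φ x ^ κ) (u / r₀) μ = eLpNorm Φ u μ ^ κ := by
    intro u Φ
    rw [eLpNorm_rpow hκ, ENNReal.ofReal_toReal hr₀_top, ENNReal.div_mul_cancel hr₀0 hr₀_top]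
  have one_le_div : ∀ {u : ℝ≥0∞}, r₀ ≤ u → 1 ≤ u / r₀ := fun hu => by
    rwa [ENNReal.le_div_iff_mul_le (Or.inl hr₀0) (Or.inl hr₀_top), one_mul]
  have inv_div : ∀ u : ℝ≥0∞, (u / r₀)⁻¹ = r₀ * u⁻¹ := fun u => by
    rw [ENNReal.inv_div (Or.inl hr₀_top) (Or.inl hr₀0), div_eq_mul_inv]
  have young := eLpNorm_lintegral_comp_sub_mul_le (hF.pow_const κ) (hH.pow_const κ)
    (one_le_div hr₀p) (one_le_div hr₀s) (a := r / r₀) (by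
      rw [inv_div, inv_div, inv_div, add_comm, ← mul_add, hs, mul_add,
        ENNReal.mul_inv_cancel hr₀0 hr₀_top])
  rw [rescale, rescale] at young
  simp_rw [ENNReal.mul_rpow_of_nonneg _ _ hκ.le]
  calc _ ≤ (eLpNorm F p μ ^ κ * eLpNorm H s μ ^ κ) ^ κ⁻¹ := by gcongr
    _ = eLpNorm F p μ * eLpNorm H s μ := by
        rw [← ENNReal.mul_rpow_of_nonneg _ _ hκ.le, ENNReal.rpow_rpow_inv hκ.ne']

end Young

theorem exists_intermediate_exponent {p₀ p₁ p₂ r₀ r₁ r₂ : ℝ≥0∞} (hp₀ : 1 ≤ p₀) (hp₂ : 1 ≤ p₂)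
    (hr₀ : 1 ≤ r₀) (h11 : p₁ ≤ r₁) (h22 : p₂ ≤ r₂) (h01 : r₀ ≤ p₁)
    (hA2 : (1 / p₁).toReal - (1 / r₁).toReal ≤ (1 / r₀).toReal - (1 / p₂).toReal)
    (hA3 : ((1 / p₁).toReal - (1 / r₁).toReal) + ((1 / p₂).toReal - (1 / r₂).toReal)
        = (1 / r₀).toReal - (1 / p₀).toReal) :
    ∃ q, 1 ≤ q ∧ q ≤ p₂ ∧ q⁻¹ + p₁⁻¹ = r₀⁻¹ + r₁⁻¹ ∧ p₀⁻¹ + p₂⁻¹ = q⁻¹ + r₂⁻¹ := by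
  have ofReal_inv : ∀ {x : ℝ≥0∞}, 1 ≤ x → ENNReal.ofReal (1 / x).toReal = x⁻¹ := fun hx => by
    rw [one_div, ENNReal.ofReal_toReal (ENNReal.inv_ne_top.2 (one_pos.trans_le hx).ne')]
  have anti : ∀ {x y : ℝ≥0∞}, 1 ≤ x → x ≤ y → (1 / y).toReal ≤ (1 / x).toReal := fun hx hxy =>
    ENNReal.toReal_mono (by simpa using (one_pos.trans_le hx).ne') (by gcongr)
  have hp₁ := hr₀.trans h01
  have hr₁ := hp₁.trans h11
  have hr₂ := hp₂.trans h22
  have hr₀_le : (1 / r₀).toReal ≤ 1 := by simpa using anti le_rfl hr₀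
  have h01' := anti hr₀ h01
  have h11' := anti hp₁ h11
  set ρ := (1 / r₀).toReal - (1 / p₁).toReal + (1 / r₁).toReal
  have hρ : 0 ≤ ρ := by positivity
  refine ⟨(ENNReal.ofReal ρ)⁻¹, ?_, ?_, ?_, ?_⟩
  · rw [ENNReal.one_le_inv, ENNReal.ofReal_le_one]
    linarith
  · rw [ENNReal.inv_le_iff_inv_le, ← ofReal_inv hp₂]
    exact ENNReal.ofReal_le_ofReal (by linarith)
  · rw [inv_inv, ← ofReal_inv hp₁, ← ofReal_inv hr₀, ← ofReal_inv hr₁,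
      ← ENNReal.ofReal_add hρ ENNReal.toReal_nonneg,
      ← ENNReal.ofReal_add ENNReal.toReal_nonneg ENNReal.toReal_nonneg]
    congr 1
    ring
  · rw [inv_inv, ← ofReal_inv hp₀, ← ofReal_inv hp₂, ← ofReal_inv hr₂,
      ← ENNReal.ofReal_add hρ ENNReal.toReal_nonneg,
      ← ENNReal.ofReal_add ENNReal.toReal_nonneg ENNReal.toReal_nonneg]
    congr 1
    linarith

theorem stmt5_general (d : ℕ) (p₀ p₁ p₂ r₀ r₁ r₂ : ℝ≥0∞)
    (hp₀ : 1 ≤ p₀) (hp₂ : 1 ≤ p₂) (hr₀ : 1 ≤ r₀)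
    (h11 : p₁ ≤ r₁) (h22 : p₂ ≤ r₂) (h01 : r₀ ≤ p₁)
    (hA2 : (1 / p₁).toReal - (1 / r₁).toReal ≤ (1 / r₀).toReal - (1 / p₂).toReal)
    (hA3 : ((1 / p₁).toReal - (1 / r₁).toReal) + ((1 / p₂).toReal - (1 / r₂).toReal)
        = (1 / r₀).toReal - (1 / p₀).toReal)
    (f₁ f₂ g : Ed d → ℂ)
    (hf₁ : MemLp f₁ p₁ volume) (hf₂ : MemLp f₂ p₂ volume) (hg : MemLp g p₀ volume) :
    eNorm volume r₂ (fun t₂ => eNorm volume r₁ (fun t₁ => eNorm volume r₀ (fun x =>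
        (‖f₁ (x - t₁) * f₂ (x - t₂) * g x‖₊ : ℝ≥0∞))))
      ≤ eLpNorm g p₀ volume * eLpNorm f₁ p₁ volume * eLpNorm f₂ p₂ volume := by
  obtain ⟨q, hq, hqp₂, hq₁, hq₂⟩ :=
    exists_intermediate_exponent hp₀ hp₂ hr₀ h11 h22 h01 hA2 hA3
  have ne_zero : ∀ {x : ℝ≥0∞}, 1 ≤ x → x ≠ 0 := fun hx => (one_pos.trans_le hx).ne'
  simp only [eNorm_eq_eLpNorm (ne_zero hr₀),
    eNorm_eq_eLpNorm (ne_zero (hr₀.trans (h01.trans h11))),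
    eNorm_eq_eLpNorm (ne_zero (hp₂.trans h22)), ← enorm_eq_nnnorm, enorm_mul, mul_assoc]
  have hF₁ := hf₁.aestronglyMeasurable.enorm
  have hF₂ := hf₂.aestronglyMeasurable.enorm
  have hG := hg.aestronglyMeasurable.enorm
  calc _ ≤ eLpNorm f₁ p₁ volume * eLpNorm (fun t₂ =>
          eLpNorm (fun x => ‖f₂ (x - t₂)‖ₑ * ‖g x‖ₑ) q volume) r₂ volume := by
        rw [← ENNReal.coe_toNNReal hf₁.eLpNorm_ne_top]
        refine eLpNorm_le_mul_eLpNorm_of_ae_le_mul' (ae_of_all _ fun t₂ => ?_) r₂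
        simp only [enorm_eq_self, ENNReal.coe_toNNReal hf₁.eLpNorm_ne_top]
        rw [← eLpNorm_enorm f₁]
        exact eLpNorm_eLpNorm_comp_sub_mul_le hF₁ ((hF₂.comp_sub_right t₂).mul hG)
          hr₀ h01 h11 hq₁
    _ ≤ eLpNorm f₁ p₁ volume * (eLpNorm f₂ p₂ volume * eLpNorm g p₀ volume) := by
        gcongr
        rw [← eLpNorm_enorm f₂, ← eLpNorm_enorm g]
        exact eLpNorm_eLpNorm_comp_sub_mul_le hF₂ hG hq hqp₂ h22 hq₂
    _ = eLpNorm g p₀ volume * (eLpNorm f₁ p₁ volume * eLpNorm f₂ p₂ volume) := by ring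

/-- the case `m = 2` of the Young-type inequality of Lemma `lemma:Young1`. -/
theorem stmt5 (d : ℕ) (hd : 1 ≤ d) (p₀ p₁ p₂ r₀ r₁ r₂ : ℝ≥0∞)
    (hp₀ : 1 ≤ p₀) (hp₁ : 1 ≤ p₁) (hp₂ : 1 ≤ p₂)
    (hr₀ : 1 ≤ r₀) (hr₁ : 1 ≤ r₁) (hr₂ : 1 ≤ r₂)
    (h11 : p₁ ≤ r₁) (h22 : p₂ ≤ r₂) (h01 : r₀ ≤ p₁)
    (hA2 : (1 / p₁).toReal - (1 / r₁).toReal ≤ (1 / r₀).toReal - (1 / p₂).toReal)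
    (hA3 : ((1 / p₁).toReal - (1 / r₁).toReal) + ((1 / p₂).toReal - (1 / r₂).toReal)
        = (1 / r₀).toReal - (1 / p₀).toReal)
    (f₁ f₂ g : Ed d → ℂ)
    (hf₁ : MemLp f₁ p₁ volume) (hf₂ : MemLp f₂ p₂ volume) (hg : MemLp g p₀ volume) :
    eNorm volume r₂ (fun t₂ => eNorm volume r₁ (fun t₁ => eNorm volume r₀ (fun x =>
        (‖f₁ (x - t₁) * f₂ (x - t₂) * g x‖₊ : ℝ≥0∞))))
      ≤ eLpNorm g p₀ volume * eLpNorm f₁ p₁ volume * eLpNorm f₂ p₂ volume :=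
  stmt5_general d p₀ p₁ p₂ r₀ r₁ r₂ hp₀ hp₂ hr₀ h11 h22 h01 hA2 hA3 f₁ f₂ g hf₁ hf₂ hg
end
end
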